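/- arXiv:2204.09319 — 5 statements merged into one kernel-verified Lean document; each statement's English description precedes it below -/
import Mathlib

section
/- Defined pointwise on functions f : D → ]-∞,M[ with structuring function b : D → ]-∞,M[ over a finite domain D (an additive group), the logarithmic dilation δ_b(f)(x) = sup_h (f(x-h) ⊕ b(h)) and logarithmic erosion ε_b(f)(x) = inf_h (f(x+h) ⊖ b(h)) form an adjunction: δ_b(g) ≤ f if and only if g ≤ ε_b(f). -/
/-!
For fixed `c < M`, the map `a ↦ a ⊕ c = c + (1 - c / M) a` is affine with positive slope and
`F ↦ F ⊖ c` is its inverse, so the two form a Galois connection on `ℝ`. Dilation and erosion are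
a translation-invariant supremum and infimum of these maps, and any such pair of pointwise Galois
connections assembles into an adjunction between functions on the group.
-/

noncomputable def lipAdd (M f g : ℝ) : ℝ := f + g - f * g / M

noncomputable def lipSub (M f g : ℝ) : ℝ := (f - g) / (1 - g / M)

/-- Logarithmic dilation: `δ_b(f)(x) = sup_h (f(x-h) ⊕ b(h))`. -/
noncomputable def logDil (M : ℝ) {D : Type*} [Fintype D] [AddGroup D] [Nonempty D]
    (b f : D → ℝ) (x : D) : ℝ :=
  Finset.univ.sup' Finset.univ_nonempty (fun h => lipAdd M (f (x - h)) (b h))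

/-- Logarithmic erosion: `ε_b(f)(x) = inf_h (f(x+h) ⊖ b(h))`. -/
noncomputable def logEro (M : ℝ) {D : Type*} [Fintype D] [AddGroup D] [Nonempty D]
    (b f : D → ℝ) (x : D) : ℝ :=
  Finset.univ.inf' Finset.univ_nonempty (fun h => lipSub M (f (x + h)) (b h))

theorem gc_lipAdd_lipSub {M c : ℝ} (hM : 0 < M) (hc : c < M) :
    GaloisConnection (fun a => lipAdd M a c) (fun F => lipSub M F c) := by
  intro a F
  have hslope : 0 < 1 - c / M := sub_pos.mpr ((div_lt_one hM).mpr hc)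
  have hlin : lipAdd M a c = c + a * (1 - c / M) := by unfold lipAdd; ring
  simp only [hlin, lipSub, le_div_iff₀ hslope]
  constructor <;> intro h <;> linarith

theorem GaloisConnection.forall_sup'_sub_le_iff_forall_le_inf'_add {D α : Type*} [Fintype D]
    [AddGroup D] [Nonempty D] [Lattice α] {l u : D → α → α}
    (gc : ∀ h, GaloisConnection (l h) (u h)) (f g : D → α) :
    (∀ x, Finset.univ.sup' Finset.univ_nonempty (fun h => l h (g (x - h))) ≤ f x) ↔
      ∀ x, g x ≤ Finset.univ.inf' Finset.univ_nonempty (fun h => u h (f (x + h))) := by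
  simp only [Finset.sup'_le_iff, Finset.le_inf'_iff, Finset.mem_univ, true_imp_iff]
  constructor
  · intro H x h
    exact (gc h).le_iff_le.mp (by simpa using H (x + h) h)
  · intro H x h
    exact (gc h).le_iff_le.mpr (by simpa using H (x - h) h)

theorem logDil_logEro_adjunction_general (M : ℝ) (hM : 0 < M) {D : Type*} [Fintype D]
    [AddGroup D] [Nonempty D] (b f g : D → ℝ)
    (hb : ∀ x, b x < M) :
    (∀ x, logDil M b g x ≤ f x) ↔ (∀ x, g x ≤ logEro M b f x) :=
  GaloisConnection.forall_sup'_sub_le_iff_forall_le_inf'_add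
    (fun h => gc_lipAdd_lipSub hM (hb h)) f g

/-- logarithmic dilation and erosion form an adjunction. -/
theorem logDil_logEro_adjunction (M : ℝ) (hM : 0 < M) {D : Type*} [Fintype D]
    [AddGroup D] [Nonempty D] (b f g : D → ℝ)
    (hb : ∀ x, b x < M) (hf : ∀ x, f x < M) (hg : ∀ x, g x < M) :
    (∀ x, logDil M b g x ≤ f x) ↔ (∀ x, g x ≤ logEro M b f x) :=
  logDil_logEro_adjunction_general M hM b f g hb
end

section
/- The logarithmic dilation satisfies δ_b(f) = ξ⁻¹(ξ(f) ⊕' ξ(b)), where ⊕' is the usual functional dilation (f ⊕' b)(x) = sup_h (f(x-h) + b(h)) and ξ is applied pointwise. -/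
noncomputable def xi (M f : ℝ) : ℝ := -M * Real.log (1 - f / M)

noncomputable def xiInv (M f : ℝ) : ℝ := M * (1 - Real.exp (-f / M))

/-- Usual functional dilation: `(f ⊕' b)(x) = sup_h (f(x-h) + b(h))`. -/
noncomputable def dil {D : Type*} [Fintype D] [AddGroup D] [Nonempty D]
    (b f : D → ℝ) (x : D) : ℝ :=
  Finset.univ.sup' Finset.univ_nonempty (fun h => f (x - h) + b h)

/-!
Since `1 - (a ⊕ c)/M = (1 - a/M)(1 - c/M)`, the logarithm turns `⊕` into `+`: `ξ` is an
isomorphism from `(]-∞, M[, ⊕)` onto `(ℝ, +)` with inverse `ξ⁻¹`. So each term of the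
logarithmic dilation is `ξ⁻¹` of the corresponding term of the additive one, and since `ξ⁻¹` is
increasing it commutes with the finite supremum.
-/

lemma one_sub_lipAdd_div {M : ℝ} (hM : M ≠ 0) (a c : ℝ) :
    1 - lipAdd M a c / M = (1 - a / M) * (1 - c / M) := by
  unfold lipAdd
  field_simp
  ring

lemma lipAdd_lt {M a c : ℝ} (hM : 0 < M) (ha : a < M) (hc : c < M) : lipAdd M a c < M := by
  have hA : 0 < 1 - a / M := sub_pos.2 ((div_lt_one hM).2 ha)
  have hC : 0 < 1 - c / M := sub_pos.2 ((div_lt_one hM).2 hc)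
  have hprod : 0 < 1 - lipAdd M a c / M := one_sub_lipAdd_div hM.ne' a c ▸ mul_pos hA hC
  exact (div_lt_one hM).1 (sub_pos.1 hprod)

lemma xi_lipAdd {M a c : ℝ} (hM : M ≠ 0) (ha : a ≠ M) (hc : c ≠ M) :
    xi M (lipAdd M a c) = xi M a + xi M c := by
  have hA : 1 - a / M ≠ 0 := sub_ne_zero.2 (div_ne_one_of_ne ha).symm
  have hC : 1 - c / M ≠ 0 := sub_ne_zero.2 (div_ne_one_of_ne hc).symm
  unfold xi
  rw [one_sub_lipAdd_div hM, Real.log_mul hA hC]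
  ring

lemma xiInv_xi {M a : ℝ} (hM : 0 < M) (ha : a < M) : xiInv M (xi M a) = a := by
  have hA : 0 < 1 - a / M := sub_pos.2 ((div_lt_one hM).2 ha)
  have hexp : -xi M a / M = Real.log (1 - a / M) := by
    unfold xi
    field_simp
  unfold xiInv
  rw [hexp, Real.exp_log hA]
  field_simp
  ring

lemma xiInv_monotone {M : ℝ} (hM : 0 ≤ M) : Monotone (xiInv M) := fun a c hac => by
  unfold xiInv
  gcongr

/-- `δ_b(f) = ξ⁻¹(ξ(f) ⊕' ξ(b))`, with `ξ` applied pointwise. -/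
theorem logDil_eq (M : ℝ) (hM : 0 < M) {D : Type*} [Fintype D] [AddGroup D]
    [Nonempty D] (b f : D → ℝ) (hb : ∀ x, b x < M) (hf : ∀ x, f x < M) :
    ∀ x, logDil M b f x = xiInv M (dil (fun h => xi M (b h)) (fun h => xi M (f h)) x) := by
  intro x
  unfold logDil dil
  rw [Finset.apply_sup'_eq_sup'_comp _ _ fun _ _ => (xiInv_monotone hM.le).map_max]
  refine Finset.sup'_congr _ rfl fun h _ => ?_
  rw [Function.comp_apply, ← xi_lipAdd hM.ne' (hf _).ne (hb _).ne,
    xiInv_xi hM (lipAdd_lt hM (hf _) (hb _))]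
end

section
/- The logarithmic erosion satisfies ε_b(f) = ξ⁻¹(ξ(f) ⊖' ξ(b)), where (f ⊖' b)(x) = inf_h (f(x+h) - b(h)) is the usual functional erosion and ξ is applied pointwise. -/
/-- Usual functional erosion: `(f ⊖' b)(x) = inf_h (f(x+h) - b(h))`. -/
noncomputable def ero {D : Type*} [Fintype D] [AddGroup D] [Nonempty D]
    (b f : D → ℝ) (x : D) : ℝ :=
  Finset.univ.inf' Finset.univ_nonempty (fun h => f (x + h) - b h)

lemma xiInv_mono (M : ℝ) (hM : 0 < M) : Monotone (xiInv M) := by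
  intro a c hac
  unfold xiInv
  gcongr

lemma xiInv_sub_xi (M : ℝ) (hM : 0 < M) (a c : ℝ) (ha : a < M) (hc : c < M) :
    xiInv M (xi M a - xi M c) = lipSub M a c := by
  have ha' : 0 < 1 - a / M := by
    rw [sub_pos, div_lt_one hM]; exact ha
  have hc' : 0 < 1 - c / M := by
    rw [sub_pos, div_lt_one hM]; exact hc
  unfold xiInv xi lipSub
  have : -(-M * Real.log (1 - a / M) - -M * Real.log (1 - c / M)) / M =
      Real.log ((1 - a / M) / (1 - c / M)) := by
    rw [Real.log_div ha'.ne' hc'.ne']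
    field_simp
    ring
  have hMc : M - c ≠ 0 := sub_ne_zero.mpr hc.ne'
  rw [this, Real.exp_log (div_pos ha' hc')]
  field_simp
  ring

/-- `ε_b(f) = ξ⁻¹(ξ(f) ⊖' ξ(b))`, with `ξ` applied pointwise. -/
theorem logEro_eq (M : ℝ) (hM : 0 < M) {D : Type*} [Fintype D] [AddGroup D]
    [Nonempty D] (b f : D → ℝ) (hb : ∀ x, b x < M) (hf : ∀ x, f x < M) :
    ∀ x, logEro M b f x = xiInv M (ero (fun h => xi M (b h)) (fun h => xi M (f h)) x) := by
  intro x
  unfold logEro ero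
  rw [Finset.apply_inf'_eq_inf'_comp _ (xiInv M)
    (fun p q => (xiInv_mono M hM).map_min)]
  apply Finset.inf'_congr _ rfl
  intro h _
  simp only [Function.comp]
  rw [xiInv_sub_xi M hM _ _ (hf _) (hb _)]
end

section
/- The composition γ_b = δ_b ∘ ε_b of the logarithmic erosion followed by the logarithmic dilation is an algebraic opening: it is increasing, anti-extensive (γ_b(f) ≤ f), and idempotent. -/
/-- The logarithmic opening `γ_b = δ_b ∘ ε_b`. -/
noncomputable def logOpen (M : ℝ) {D : Type*} [Fintype D] [AddGroup D] [Nonempty D]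
    (b f : D → ℝ) : D → ℝ :=
  logDil M b (logEro M b f)

/-!
For `c < M`, the map `a ↦ a ⊕ c = c + a (1 - c/M)` is an increasing affine bijection with
inverse `d ↦ d ⊖ c`, so `⊕ c` and `⊖ c` are adjoint. Taking the supremum over translates,
the logarithmic dilation and erosion form a Galois connection on `D → ℝ`, and every
composite `δ ∘ ε` of a Galois connection is an opening.
-/

lemma lipAdd_le_iff_le_lipSub {M a c d : ℝ} (hM : 0 < M) (hc : c < M) :
    lipAdd M a c ≤ d ↔ a ≤ lipSub M d c := by
  have hpos : 0 < 1 - c / M := sub_pos.2 ((div_lt_one hM).2 hc)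
  unfold lipAdd lipSub
  rw [le_div_iff₀ hpos, mul_sub, mul_one, mul_div_assoc]
  constructor <;> intro <;> linarith

lemma gc_logDil_logEro {M : ℝ} (hM : 0 < M) {D : Type*} [Fintype D] [AddGroup D]
    [Nonempty D] {b : D → ℝ} (hb : ∀ x, b x < M) :
    GaloisConnection (logDil M b) (logEro M b) := by
  intro f g
  simp only [Pi.le_def, logDil, logEro, Finset.sup'_le_iff, Finset.le_inf'_iff,
    Finset.mem_univ, true_implies, lipAdd_le_iff_le_lipSub hM (hb _)]
  constructor
  · intro H x h
    simpa using H (x + h) h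
  · intro H x h
    simpa using H (x - h) h

/-- `γ_b = δ_b ∘ ε_b` is an algebraic opening: increasing,
anti-extensive and idempotent. -/
theorem logOpen_is_opening (M : ℝ) (hM : 0 < M) {D : Type*} [Fintype D]
    [AddGroup D] [Nonempty D] (b : D → ℝ) (hb : ∀ x, b x < M) :
    (∀ f g : D → ℝ, (∀ x, f x < M) → (∀ x, g x < M) → (∀ x, f x ≤ g x) →
      ∀ x, logOpen M b f x ≤ logOpen M b g x) ∧
    (∀ f : D → ℝ, (∀ x, f x < M) → ∀ x, logOpen M b f x ≤ f x) ∧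
    (∀ f : D → ℝ, (∀ x, f x < M) → logOpen M b (logOpen M b f) = logOpen M b f) := by
  have gc := gc_logDil_logEro hM hb
  refine ⟨fun f g _ _ hfg => ?_, fun f _ => ?_, fun f _ => ?_⟩
  · exact gc.monotone_l (gc.monotone_u hfg)
  · exact gc.l_u_le f
  · exact gc.l_u_l_eq_l (logEro M b f)
end

section
/- Both the logarithmic dilation and the logarithmic erosion commute with LIP-addition of a constant: δ_b(f ⊕ k) = δ_b(f) ⊕ k and ε_b(f ⊕ k) = ε_b(f) ⊕ k for any constant k ∈ ]-∞, M[. -/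
lemma lipAdd_swap (M a k c : ℝ) (hM : M ≠ 0) :
    lipAdd M (lipAdd M a k) c = lipAdd M (lipAdd M a c) k := by
  unfold lipAdd; field_simp; ring

lemma lipSub_lipAdd_swap (M a k c : ℝ) (hM : M ≠ 0) (hc : 1 - c / M ≠ 0) :
    lipSub M (lipAdd M a k) c = lipAdd M (lipSub M a c) k := by
  have hc' : M - c ≠ 0 := by
    intro h
    apply hc
    have : c = M := by linarith [sub_eq_zero.mp h]
    simp [this, div_self hM]
  unfold lipAdd lipSub; field_simp; ring

lemma lipAdd_max (M k : ℝ) (hM : 0 < M) (hk : k < M) (a b : ℝ) :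
    lipAdd M (max a b) k = max (lipAdd M a k) (lipAdd M b k) := by
  have hp : (0:ℝ) ≤ 1 - k / M := by
    rw [sub_nonneg, div_le_one hM]; exact hk.le
  have h : ∀ a : ℝ, lipAdd M a k = a * (1 - k / M) + k := by
    intro a; unfold lipAdd; ring
  rw [h, h, h, max_mul_of_nonneg _ _ hp, max_add_add_right]

lemma lipAdd_min (M k : ℝ) (hM : 0 < M) (hk : k < M) (a b : ℝ) :
    lipAdd M (min a b) k = min (lipAdd M a k) (lipAdd M b k) := by
  have hp : (0:ℝ) ≤ 1 - k / M := by
    rw [sub_nonneg, div_le_one hM]; exact hk.le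
  have h : ∀ a : ℝ, lipAdd M a k = a * (1 - k / M) + k := by
    intro a; unfold lipAdd; ring
  rw [h, h, h, min_mul_of_nonneg _ _ hp, min_add_add_right]

/-- logarithmic dilation and erosion commute with the
LIP-addition of a constant `k ∈ ]-∞, M[`. -/
theorem logDil_logEro_lipAdd_const (M : ℝ) (hM : 0 < M) {D : Type*} [Fintype D]
    [AddGroup D] [Nonempty D] (b f : D → ℝ) (hb : ∀ x, b x < M) (hf : ∀ x, f x < M)
    (k : ℝ) (hk : k < M) :
    (∀ x, logDil M b (fun y => lipAdd M (f y) k) x = lipAdd M (logDil M b f x) k) ∧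
    (∀ x, logEro M b (fun y => lipAdd M (f y) k) x = lipAdd M (logEro M b f x) k) := by
  have hM' : M ≠ 0 := hM.ne'
  constructor
  · intro x
    rw [logDil, logDil,
      Finset.comp_sup'_eq_sup'_comp _ (fun a => lipAdd M a k) (lipAdd_max M k hM hk)]
    exact Finset.sup'_congr _ rfl fun h _ => lipAdd_swap M (f (x - h)) k (b h) hM'
  · intro x
    rw [logEro, logEro,
      Finset.apply_inf'_eq_inf'_comp _ (fun a => lipAdd M a k) (lipAdd_min M k hM hk)]
    refine Finset.inf'_congr _ rfl fun h _ => ?_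
    have hc : 1 - b h / M ≠ 0 := by
      have : b h / M < 1 := (div_lt_one hM).2 (hb h)
      linarith
    exact lipSub_lipAdd_swap M (f (x + h)) k (b h) hM' hc
end
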